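/- (Subregime B3.) Suppose c_H(0,·) and c_L(0,·) are continuous on [0,1], F_l > 0, 0 < p^d < (1−θ)·F_l and 0 < p^t_l < Δc^θ(σ̂^t_l) − F_l. Then there is a unique PBE (σ*, β*); it satisfies σ^t*_h = 0, σ^d*_H = 1, σ^d*_L = 0, σ^t*_l equals the unique σ_l ∈ (0,1) with Δc^θ(σ_l) = p^t_l + F_l, β*(h|H) = θ/(θ + (1−θ)σ^t*_l), β*(l|H) = (1−θ)σ^t*_l/(θ + (1−θ)σ^t*_l), β*(h|L) = 0 and β*(l|L) = 1. -/

import Mathlib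

open Set

/-- Perfect Bayesian equilibrium of the two-server misbehavior-inspection signaling game.
The strategy profile is `(sh, sl, dH, dL)` (misbehavior rates of types `h` and `l`, and the
operator's inspection probabilities on servers `H` and `L`) and the belief assessment is
`(bhH, blH, bhL, blL)`. -/
def IsPBE (θ pth ptl pd Fh Fl : ℝ) (cH cL : ℝ → ℝ → ℝ)
    (sh sl dH dL bhH blH bhL blL : ℝ) : Prop :=
  sh ∈ Icc (0:ℝ) 1 ∧ sl ∈ Icc (0:ℝ) 1 ∧ dH ∈ Icc (0:ℝ) 1 ∧ dL ∈ Icc (0:ℝ) 1 ∧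
  bhH ∈ Icc (0:ℝ) 1 ∧ blH = 1 - bhH ∧ bhL ∈ Icc (0:ℝ) 1 ∧ blL = 1 - bhL ∧
  -- sequential rationality of type h agents
  (0 < sh → -(cL sh sl) - pth - Fh * dL ≥ -(cH sh sl)) ∧
  (sh < 1 → -(cL sh sl) - pth - Fh * dL ≤ -(cH sh sl)) ∧
  -- sequential rationality of type l agents
  (0 < sl → -(cH sh sl) - ptl - Fl * dH ≥ -(cL sh sl)) ∧
  (sl < 1 → -(cH sh sl) - ptl - Fl * dH ≤ -(cL sh sl)) ∧
  -- operator optimality on servers H and L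
  (∀ x ∈ Icc (0:ℝ) 1, (-pd + Fl * blH) * x ≤ (-pd + Fl * blH) * dH) ∧
  (∀ x ∈ Icc (0:ℝ) 1, (-pd + Fh * bhL) * x ≤ (-pd + Fh * bhL) * dL) ∧
  -- consistency of beliefs (Bayes' rule)
  (0 < θ * (1 - sh) + (1 - θ) * sl →
    bhH = θ * (1 - sh) / (θ * (1 - sh) + (1 - θ) * sl)) ∧
  (0 < θ * sh + (1 - θ) * (1 - sl) →
    bhL = θ * sh / (θ * sh + (1 - θ) * (1 - sl)))

/-!
Type `h` agents never misbehave: if they did, they would weakly prefer `L`, so type `l` agents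
would strictly prefer `L` as well, and with no type `l` misbehavior (A1)–(A2) make `H` strictly
cheaper for type `h`. Hence nobody of type `h` is ever on `L` and the operator never inspects it.
On `H` the operator's gain from inspecting, `-pᵈ + F_l β(l|H)`, has the sign of `σ_l - σ̂_l`.
If `H` were not fully inspected, that gain would be `≤ 0`, so `σ_l ≤ σ̂_l` and
`Δc(σ_l) ≥ Δc(σ̂_l) > pᵗ_l + F_l`, and type `l` agents would all misbehave — impossible since
`Δc(1) < 0`. So `σᵈ_H = 1`, `σ_l > σ̂_l > 0`, and indifference of type `l` pins `σ_l` as the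
unique root of `Δc = pᵗ_l + F_l`, which exists on `(σ̂_l, 1)` by the intermediate value theorem.
-/

/-- The paper's `Δcᶿ`. -/
def costGap (cH cL : ℝ → ℝ → ℝ) (y : ℝ) : ℝ := cL 0 y - cH 0 y

/-- The paper's `σ̂ᵗ_l`. -/
noncomputable def misbehaviorThreshold (θ pd Fl : ℝ) : ℝ := pd * θ / ((1 - θ) * (Fl - pd))

section LinearMaximization

variable {c d : ℝ}

lemma nonpos_of_forall_mul_le_of_lt_one (h : ∀ x ∈ Icc (0:ℝ) 1, c * x ≤ c * d) (hd : d < 1) :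
    c ≤ 0 := by
  have := h 1 ⟨zero_le_one, le_rfl⟩
  nlinarith

lemma nonneg_of_forall_mul_le_of_pos (h : ∀ x ∈ Icc (0:ℝ) 1, c * x ≤ c * d) (hd : 0 < d) :
    0 ≤ c := by
  have := h 0 ⟨le_rfl, zero_le_one⟩
  nlinarith

lemma forall_mul_le_mul_one (hc : 0 ≤ c) : ∀ x ∈ Icc (0:ℝ) 1, c * x ≤ c * 1 :=
  fun _ hx => mul_le_mul_of_nonneg_left hx.2 hc

lemma forall_mul_le_mul_zero (hc : c ≤ 0) : ∀ x ∈ Icc (0:ℝ) 1, c * x ≤ c * 0 :=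
  fun x hx => by nlinarith [hx.1]

end LinearMaximization

section Threshold

variable {θ pd Fl : ℝ}

lemma misbehaviorThreshold_pos (hθ : θ ∈ Ioo (0:ℝ) 1) (hpd : 0 < pd) (hpdFl : pd < Fl) :
    0 < misbehaviorThreshold θ pd Fl :=
  div_pos (mul_pos hpd hθ.1) (mul_pos (sub_pos.2 hθ.2) (sub_pos.2 hpdFl))

lemma misbehaviorThreshold_lt_one (hθ : θ < 1) (hpdFl : pd < Fl) (hpd : pd < (1 - θ) * Fl) :
    misbehaviorThreshold θ pd Fl < 1 := by
  rw [misbehaviorThreshold, div_lt_one (mul_pos (sub_pos.2 hθ) (sub_pos.2 hpdFl))]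
  nlinarith

lemma bayes_denom_pos (hθ : θ ∈ Ioo (0:ℝ) 1) {sl : ℝ} (hsl : 0 ≤ sl) :
    0 < θ + (1 - θ) * sl :=
  add_pos_of_pos_of_nonneg hθ.1 (mul_nonneg (sub_pos.2 hθ.2).le hsl)

lemma inspectionGain_eq (hθ : θ < 1) (hpdFl : pd < Fl) {sl : ℝ} (hD : 0 < θ + (1 - θ) * sl) :
    -pd + Fl * ((1 - θ) * sl / (θ + (1 - θ) * sl)) =
      (1 - θ) * (Fl - pd) * (sl - misbehaviorThreshold θ pd Fl) / (θ + (1 - θ) * sl) := by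
  have h1θ : 1 - θ ≠ 0 := (sub_pos.2 hθ).ne'
  have hFlpd : Fl - pd ≠ 0 := (sub_pos.2 hpdFl).ne'
  rw [misbehaviorThreshold]
  field_simp
  ring

lemma inspectionGain_pos_iff (hθ : θ < 1) (hpdFl : pd < Fl) {sl : ℝ}
    (hD : 0 < θ + (1 - θ) * sl) :
    0 < -pd + Fl * ((1 - θ) * sl / (θ + (1 - θ) * sl)) ↔ misbehaviorThreshold θ pd Fl < sl := by
  rw [inspectionGain_eq hθ hpdFl hD, div_pos_iff_of_pos_right hD,
    mul_pos_iff_of_pos_left (mul_pos (sub_pos.2 hθ) (sub_pos.2 hpdFl)), sub_pos]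

lemma inspectionGain_nonneg_iff (hθ : θ < 1) (hpdFl : pd < Fl) {sl : ℝ}
    (hD : 0 < θ + (1 - θ) * sl) :
    0 ≤ -pd + Fl * ((1 - θ) * sl / (θ + (1 - θ) * sl)) ↔ misbehaviorThreshold θ pd Fl ≤ sl := by
  rw [inspectionGain_eq hθ hpdFl hD, le_div_iff₀ hD, zero_mul,
    mul_nonneg_iff_of_pos_left (mul_pos (sub_pos.2 hθ) (sub_pos.2 hpdFl)), sub_nonneg]

end Threshold

lemma costGap_strictAntiOn {cH cL : ℝ → ℝ → ℝ}
    (hHl : StrictMonoOn (fun y => cH 0 y) (Icc 0 1))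
    (hLl : StrictAntiOn (fun y => cL 0 y) (Icc 0 1)) :
    StrictAntiOn (costGap cH cL) (Icc 0 1) :=
  fun _ ha _ hb hab => sub_lt_sub (hLl ha hb hab) (hHl ha hb hab)

lemma cH_lt_cL_of_pos {cH cL : ℝ → ℝ → ℝ} (hA1 : cH 0 0 < cL 0 0)
    (hHh : StrictAntiOn (fun x => cH x 0) (Icc 0 1))
    (hLh : StrictMonoOn (fun x => cL x 0) (Icc 0 1)) {x : ℝ} (hx : x ∈ Ioc (0:ℝ) 1) :
    cH x 0 < cL x 0 := by
  have h0 : (0:ℝ) ∈ Icc (0:ℝ) 1 := ⟨le_rfl, zero_le_one⟩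
  have hx' : x ∈ Icc (0:ℝ) 1 := Ioc_subset_Icc_self hx
  calc cH x 0 < cH 0 0 := hHh h0 hx' hx.1
    _ < cL 0 0 := hA1
    _ < cL x 0 := hLh h0 hx' hx.1

namespace IsPBE

variable {θ pth ptl pd Fh Fl : ℝ} {cH cL : ℝ → ℝ → ℝ} {sh sl dH dL bhH blH bhL blL : ℝ}

lemma sh_eq_zero (h : IsPBE θ pth ptl pd Fh Fl cH cL sh sl dH dL bhH blH bhL blL)
    (hpth : 0 ≤ pth) (hptl : 0 < ptl) (hFh : 0 ≤ Fh) (hFl : 0 ≤ Fl)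
    (hsep : ∀ x ∈ Ioc (0:ℝ) 1, cH x 0 < cL x 0) : sh = 0 := by
  obtain ⟨hsh, hsl, hdH, hdL, -, -, -, -, hh, -, hl, -⟩ := h
  by_contra hne
  have hpos : 0 < sh := lt_of_le_of_ne hsh.1 (Ne.symm hne)
  have hL_le_H : cL sh sl ≤ cH sh sl := by nlinarith [hh hpos, hdL.1]
  have hsl0 : sl = 0 := by
    by_contra hne'
    nlinarith [hl (lt_of_le_of_ne hsl.1 (Ne.symm hne')), hdH.1]
  subst hsl0
  exact (hsep sh ⟨hpos, hsh.2⟩).not_ge hL_le_H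

variable (h : IsPBE θ pth ptl pd Fh Fl cH cL 0 sl dH dL bhH blH bhL blL)
include h

lemma sl_lt_one (hptl : 0 ≤ ptl) (hFl : 0 ≤ Fl) (hgap : cL 0 1 < cH 0 1) : sl < 1 := by
  obtain ⟨-, hsl, hdH, -, -, -, -, -, -, -, hl, -⟩ := h
  refine lt_of_le_of_ne hsl.2 fun hsl1 => ?_
  subst hsl1
  nlinarith [hl one_pos, hdH.1]

lemma bhL_eq_zero (hθ : θ < 1) (hsl : sl < 1) : bhL = 0 := by
  obtain ⟨-, -, -, -, -, -, -, -, -, -, -, -, -, -, -, hcons⟩ := h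
  simpa using hcons (by nlinarith)

lemma dL_eq_zero (hpd : 0 < pd) (hbhL : bhL = 0) : dL = 0 := by
  obtain ⟨-, -, -, hdL, -, -, -, -, -, -, -, -, -, hop, -⟩ := h
  subst hbhL
  have := nonneg_of_forall_mul_le_of_pos hop
  by_contra hne
  linarith [this (lt_of_le_of_ne hdL.1 (Ne.symm hne))]

lemma bhH_eq (hθ : θ ∈ Ioo (0:ℝ) 1) : bhH = θ / (θ + (1 - θ) * sl) := by
  obtain ⟨-, hsl, -, -, -, -, -, -, -, -, -, -, -, -, hcons, -⟩ := h
  simpa using hcons (by simpa using bayes_denom_pos hθ hsl.1)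

lemma blH_eq (hθ : θ ∈ Ioo (0:ℝ) 1) : blH = (1 - θ) * sl / (θ + (1 - θ) * sl) := by
  have hbhH := h.bhH_eq hθ
  obtain ⟨-, hsl, -, -, -, hblH, -⟩ := h
  have hD := bayes_denom_pos hθ hsl.1
  rw [hblH, hbhH]
  field_simp
  ring

lemma blL_eq_one (hbhL : bhL = 0) : blL = 1 := by
  obtain ⟨-, -, -, -, -, -, -, hblL, -⟩ := h
  rw [hblL, hbhL, sub_zero]

lemma costGap_eq (hsl0 : 0 < sl) (hsl1 : sl < 1) : costGap cH cL sl = ptl + Fl * dH := by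
  obtain ⟨-, -, -, -, -, -, -, -, -, -, hl₁, hl₂, -⟩ := h
  have := hl₁ hsl0
  have := hl₂ hsl1
  rw [costGap]
  linarith

lemma misbehaviorThreshold_le (hθ : θ ∈ Ioo (0:ℝ) 1) (hpdFl : pd < Fl) (hdH : dH = 1) :
    misbehaviorThreshold θ pd Fl ≤ sl := by
  have hblH := h.blH_eq hθ
  obtain ⟨-, hsl, -, -, -, -, -, -, -, -, -, -, hop, -⟩ := h
  rw [← inspectionGain_nonneg_iff hθ.2 hpdFl (bayes_denom_pos hθ hsl.1), ← hblH]
  exact nonneg_of_forall_mul_le_of_pos hop (hdH ▸ one_pos)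

lemma dH_eq_one (hθ : θ ∈ Ioo (0:ℝ) 1) (hpdFl : pd < Fl) (hFl : 0 ≤ Fl)
    (hanti : StrictAntiOn (costGap cH cL) (Icc 0 1)) (hs1 : misbehaviorThreshold θ pd Fl < 1)
    (hcond : ptl + Fl < costGap cH cL (misbehaviorThreshold θ pd Fl)) (hsl1 : sl < 1) :
    dH = 1 := by
  have hblH := h.blH_eq hθ
  obtain ⟨-, hsl, hdH, -, -, -, -, -, -, -, -, hl, hop, -⟩ := h
  have hD := bayes_denom_pos hθ hsl.1
  by_contra hne
  have hgain := nonpos_of_forall_mul_le_of_lt_one hop (lt_of_le_of_ne hdH.2 hne)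
  rw [hblH, ← not_lt, inspectionGain_pos_iff hθ.2 hpdFl hD, not_lt] at hgain
  have hs0 : 0 ≤ misbehaviorThreshold θ pd Fl := hsl.1.trans hgain
  have hgap := hanti.antitoneOn hsl ⟨hs0, hs1.le⟩ hgain
  have := hl hsl1
  unfold costGap at hgap hcond
  nlinarith [hdH.2]

end IsPBE

lemma isPBE_of_costGap_eq {θ pth ptl pd Fh Fl : ℝ} {cH cL : ℝ → ℝ → ℝ} {sl : ℝ}
    (hθ : θ ∈ Ioo (0:ℝ) 1) (hpth : 0 ≤ pth) (hpd : 0 < pd) (hpdFl : pd < Fl)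
    (hptl : 0 ≤ ptl) (hsl : sl ∈ Ioo (misbehaviorThreshold θ pd Fl) 1)
    (hgap : costGap cH cL sl = ptl + Fl) :
    IsPBE θ pth ptl pd Fh Fl cH cL 0 sl 1 0 (θ / (θ + (1 - θ) * sl))
      ((1 - θ) * sl / (θ + (1 - θ) * sl)) 0 1 := by
  have hs0 := misbehaviorThreshold_pos hθ hpd hpdFl
  have hsl0 : 0 < sl := hs0.trans hsl.1
  have hD := bayes_denom_pos hθ hsl0.le
  have hbhH_le : θ / (θ + (1 - θ) * sl) ≤ 1 :=
    (div_le_one hD).2 (le_add_of_nonneg_right (mul_nonneg (sub_pos.2 hθ.2).le hsl0.le))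
  have hgain := (inspectionGain_pos_iff hθ.2 hpdFl hD).2 hsl.1
  rw [costGap] at hgap
  refine ⟨⟨le_rfl, zero_le_one⟩, ⟨hsl0.le, hsl.2.le⟩, ⟨zero_le_one, le_rfl⟩, ⟨le_rfl, zero_le_one⟩,
    ⟨div_nonneg hθ.1.le hD.le, hbhH_le⟩, ?_, ⟨le_rfl, zero_le_one⟩, (sub_zero 1).symm, fun h => absurd h (lt_irrefl 0), fun _ => by linarith,
    fun _ => by linarith, fun _ => by linarith, forall_mul_le_mul_one hgain.le,
    forall_mul_le_mul_zero (by linarith), fun _ => by simp, fun _ => by simp⟩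
  field_simp
  ring

theorem subregime_B3_general
    (θ pth ptl pd Fh Fl : ℝ) (cH cL : ℝ → ℝ → ℝ)
    (hθ : θ ∈ Ioo (0:ℝ) 1) (hpth : 0 ≤ pth) (hptl : 0 < ptl)
    (hpd : 0 < pd) (hFh : 0 ≤ Fh) (hFl : 0 ≤ Fl)
    (hA1 : cH 0 0 < cL 0 0 ∧ cL 0 1 < cH 0 1)
    (hA2Hh : ∀ y ∈ Icc (0:ℝ) 1, StrictAntiOn (fun x => cH x y) (Icc 0 1))
    (hA2Hl : ∀ x ∈ Icc (0:ℝ) 1, StrictMonoOn (fun y => cH x y) (Icc 0 1))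
    (hA2Lh : ∀ y ∈ Icc (0:ℝ) 1, StrictMonoOn (fun x => cL x y) (Icc 0 1))
    (hA2Ll : ∀ x ∈ Icc (0:ℝ) 1, StrictAntiOn (fun y => cL x y) (Icc 0 1))
    (hcontH : ContinuousOn (fun y => cH 0 y) (Icc 0 1))
    (hcontL : ContinuousOn (fun y => cL 0 y) (Icc 0 1))
    (hpdlt : pd < (1 - θ) * Fl)
    (hcond : ptl < cL 0 (pd * θ / ((1 - θ) * (Fl - pd))) - cH 0 (pd * θ / ((1 - θ) * (Fl - pd))) - Fl) :
    (∃ sh sl dH dL bhH blH bhL blL,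
      IsPBE θ pth ptl pd Fh Fl cH cL sh sl dH dL bhH blH bhL blL) ∧
    ∀ sh sl dH dL bhH blH bhL blL,
      IsPBE θ pth ptl pd Fh Fl cH cL sh sl dH dL bhH blH bhL blL →
      sh = 0 ∧ dH = 1 ∧ dL = 0 ∧
        sl ∈ Ioo (0:ℝ) 1 ∧ cL 0 sl - cH 0 sl = ptl + Fl ∧
        (∀ y ∈ Ioo (0:ℝ) 1, cL 0 y - cH 0 y = ptl + Fl → y = sl) ∧
        bhH = θ / (θ + (1 - θ) * sl) ∧
        blH = (1 - θ) * sl / (θ + (1 - θ) * sl) ∧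
        bhL = 0 ∧ blL = 1 := by
  have h0 : (0:ℝ) ∈ Icc (0:ℝ) 1 := ⟨le_rfl, zero_le_one⟩
  have hpdFl : pd < Fl := by nlinarith [hθ.1]
  set s := misbehaviorThreshold θ pd Fl
  have hs0 : 0 < s := misbehaviorThreshold_pos hθ hpd hpdFl
  have hs1 : s < 1 := misbehaviorThreshold_lt_one hθ.2 hpdFl hpdlt
  have hanti := costGap_strictAntiOn (hA2Hl 0 h0) (hA2Ll 0 h0)
  have hcond' : ptl + Fl < costGap cH cL s := lt_sub_iff_add_lt.mp hcond
  have hcont : ContinuousOn (costGap cH cL) (Icc 0 1) := hcontL.sub hcontH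
  obtain ⟨sl, hsl, hgap⟩ : ∃ sl ∈ Ioo s 1, costGap cH cL sl = ptl + Fl :=
    intermediate_value_Ioo' hs1.le (hcont.mono (Icc_subset_Icc hs0.le le_rfl))
      ⟨by unfold costGap; linarith [hA1.2], hcond'⟩
  refine ⟨⟨_, _, _, _, _, _, _, _, isPBE_of_costGap_eq hθ hpth hpd hpdFl hptl.le hsl hgap⟩,
    fun sh sl dH dL bhH blH bhL blL h => ?_⟩
  obtain rfl := h.sh_eq_zero hpth hptl hFh hFl fun x hx =>
    cH_lt_cL_of_pos hA1.1 (hA2Hh 0 h0) (hA2Lh 0 h0) hx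
  have hsl1 := h.sl_lt_one hptl.le hFl hA1.2
  obtain rfl := h.dH_eq_one hθ hpdFl hFl hanti hs1 hcond' hsl1
  have hsl0 : 0 < sl := hs0.trans_le (h.misbehaviorThreshold_le hθ hpdFl rfl)
  have hgap' : costGap cH cL sl = ptl + Fl := by rw [h.costGap_eq hsl0 hsl1, mul_one]
  have hbhL := h.bhL_eq_zero hθ.2 hsl1
  refine ⟨rfl, rfl, h.dL_eq_zero hpd hbhL, ⟨hsl0, hsl1⟩, hgap', fun y hy hy' => ?_,
    h.bhH_eq hθ, h.blH_eq hθ, hbhL, h.blL_eq_one hbhL⟩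
  exact hanti.injOn (Ioo_subset_Icc_self hy) ⟨hsl0.le, hsl1.le⟩ (hy'.trans hgap'.symm)

/-- Subregime B3: the unique PBE has full inspection on server H, with misbehavior
rate solving `Δcᵗʰ(sl) = pᵗ_l + Fl`. -/
theorem subregime_B3
    (θ pth ptl pd Fh Fl : ℝ) (cH cL : ℝ → ℝ → ℝ)
    (hθ : θ ∈ Ioo (0:ℝ) 1) (hpth : 0 ≤ pth) (hptl : 0 < ptl)
    (hpd : 0 < pd) (hFh : 0 ≤ Fh) (hFl : 0 ≤ Fl)
    (hA1 : cH 0 0 < cL 0 0 ∧ cL 0 1 < cH 0 1)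
    (hA2Hh : ∀ y ∈ Icc (0:ℝ) 1, StrictAntiOn (fun x => cH x y) (Icc 0 1))
    (hA2Hl : ∀ x ∈ Icc (0:ℝ) 1, StrictMonoOn (fun y => cH x y) (Icc 0 1))
    (hA2Lh : ∀ y ∈ Icc (0:ℝ) 1, StrictMonoOn (fun x => cL x y) (Icc 0 1))
    (hA2Ll : ∀ x ∈ Icc (0:ℝ) 1, StrictAntiOn (fun y => cL x y) (Icc 0 1))
    (hcontH : ContinuousOn (fun y => cH 0 y) (Icc 0 1))
    (hcontL : ContinuousOn (fun y => cL 0 y) (Icc 0 1))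
    (hFl' : 0 < Fl) (hpdlt : pd < (1 - θ) * Fl)
    (hcond : ptl < cL 0 (pd * θ / ((1 - θ) * (Fl - pd))) - cH 0 (pd * θ / ((1 - θ) * (Fl - pd))) - Fl) :
    (∃ sh sl dH dL bhH blH bhL blL,
      IsPBE θ pth ptl pd Fh Fl cH cL sh sl dH dL bhH blH bhL blL) ∧
    ∀ sh sl dH dL bhH blH bhL blL,
      IsPBE θ pth ptl pd Fh Fl cH cL sh sl dH dL bhH blH bhL blL →
      sh = 0 ∧ dH = 1 ∧ dL = 0 ∧
        sl ∈ Ioo (0:ℝ) 1 ∧ cL 0 sl - cH 0 sl = ptl + Fl ∧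
        (∀ y ∈ Ioo (0:ℝ) 1, cL 0 y - cH 0 y = ptl + Fl → y = sl) ∧
        bhH = θ / (θ + (1 - θ) * sl) ∧
        blH = (1 - θ) * sl / (θ + (1 - θ) * sl) ∧
        bhL = 0 ∧ blL = 1 :=
  subregime_B3_general θ pth ptl pd Fh Fl cH cL hθ hpth hptl hpd hFh hFl hA1 hA2Hh hA2Hl hA2Lh hA2Ll
    hcontH hcontL hpdlt hcond
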